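/- arXiv:2308.09261 — 2 statements merged into one kernel-verified Lean document; each statement's English description precedes it below -/
import Mathlib

section
/- Let B and C be bounded linear operators on H admitting A-adjoints B♯ and C♯. Then for every nonzero complex number α, (w_{A,e}(B,C))² ≤ ( max{1, |1 − α|}·‖(B,C)‖_{A,e}·‖(B♯,C♯)‖_{A,e} + w_A(B²) + w_A(C²) ) / |α|. -/
noncomputable section

open scoped ComplexInnerProductSpace

variable {H : Type*} [NormedAddCommGroup H] [InnerProductSpace ℂ H] [CompleteSpace H]

/-- The semi-inner product induced by a positive operator `A`:
`⟨x,y⟩_A = ⟨Ax,y⟩` (linear in the first argument, following the paper's convention). -/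
def innerA (A : H →L[ℂ] H) (x y : H) : ℂ := ⟪y, A x⟫

/-- The seminorm induced by `A`: `‖x‖_A = ⟨Ax,x⟩^{1/2}`. -/
def normA (A : H →L[ℂ] H) (x : H) : ℝ := Real.sqrt (innerA A x x).re

/-- The `A`-numerical radius `w_A(T) = sup { |⟨Tx,x⟩_A| : ‖x‖_A = 1 }`. -/
def wA (A T : H →L[ℂ] H) : ℝ :=
  sSup {r : ℝ | ∃ x : H, normA A x = 1 ∧ r = ‖innerA A (T x) x‖}

/-- The `A`-Crawford number `c_A(T) = inf { |⟨Tx,x⟩_A| : ‖x‖_A = 1 }`. -/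
def cA (A T : H →L[ℂ] H) : ℝ :=
  sInf {r : ℝ | ∃ x : H, normA A x = 1 ∧ r = ‖innerA A (T x) x‖}

/-- The `A`-operator seminorm `‖T‖_A = sup { ‖Tx‖_A : ‖x‖_A = 1 }`. -/
def opNormA (A T : H →L[ℂ] H) : ℝ :=
  sSup {r : ℝ | ∃ x : H, normA A x = 1 ∧ r = normA A (T x)}

/-- The `A`-Euclidean operator radius of the pair `(B, C)`. -/
def wAe (A B C : H →L[ℂ] H) : ℝ :=
  sSup {r : ℝ | ∃ x : H, normA A x = 1 ∧
    r = Real.sqrt (‖innerA A (B x) x‖^2 + ‖innerA A (C x) x‖^2)}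

/-- The `A`-Euclidean operator seminorm of the pair `(B, C)`. -/
def normAe (A B C : H →L[ℂ] H) : ℝ :=
  sSup {r : ℝ | ∃ x : H, normA A x = 1 ∧
    r = Real.sqrt ((normA A (B x))^2 + (normA A (C x))^2)}

/-- `Re_A(T) = (T + T♯)/2`, where `Ts` is an `A`-adjoint of `T`. -/
def ReA (T Ts : H →L[ℂ] H) : H →L[ℂ] H := (2 : ℂ)⁻¹ • (T + Ts)

/-- `Im_A(T) = (T - T♯)/(2i)`, where `Ts` is an `A`-adjoint of `T`. -/
def ImA (T Ts : H →L[ℂ] H) : H →L[ℂ] H := (2 * Complex.I)⁻¹ • (T - Ts)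

/-!
Write `A = R† R`, so that `⟨x, y⟩_A = ⟪R y, R x⟫` and `T♯` being an `A`-adjoint of `T` means
`⟪R (T♯ u), R v⟫ = ⟪R u, R (T v)⟫`. For a unit vector `e` and the projection `P_e` onto `ℂ e`,
`α ⟪a, e⟫ ⟪e, b⟫ = ⟪a, (α P_e - 1) b⟫ + ⟪a, b⟫` with `‖α P_e - 1‖ = max 1 ‖1 - α‖`, a Buzano-type
inequality. Taking `e = R x`, `a = R (T♯ x)`, `b = R (T x)` gives
`|α| |⟨T x, x⟩_A|² ≤ max 1 ‖1 - α‖ ‖T♯ x‖_A ‖T x‖_A + |⟨T² x, x⟩_A|`; add this for `T = B, C`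
and apply Cauchy–Schwarz in `ℝ²`.

The suprema involved are finite since an operator `P` that is symmetric for `⟨·, ·⟩_A` satisfies
`‖P x‖_A ^ 2 ^ n ≤ ‖P ^ 2 ^ n x‖_A` when `‖x‖_A = 1`, hence `‖P x‖_A ≤ ‖P‖`; this applies to
`P = T♯ T`, and `‖T x‖_A ^ 2 ≤ ‖T♯ T x‖_A`.
-/

open scoped InnerProductSpace

section Buzano

variable {𝕜 E : Type*} [RCLike 𝕜] [SeminormedAddCommGroup E] [InnerProductSpace 𝕜 E]

theorem norm_smul_inner_smul_sub_le {e : E} (he : ‖e‖ = 1) (α : 𝕜) (b : E) :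
    ‖α • ⟪e, b⟫_𝕜 • e - b‖ ≤ max 1 ‖1 - α‖ * ‖b‖ := by
  set c := ⟪e, b⟫_𝕜
  set b' := b - c • e
  have horth : ⟪c • e, b'⟫_𝕜 = 0 := by
    have hee : ⟪e, e⟫_𝕜 = 1 := by simp [inner_self_eq_norm_sq_to_K, he]
    rw [inner_smul_left, inner_sub_right, inner_smul_right, hee, mul_one, sub_self, mul_zero]
  have hb : ‖b‖ ^ 2 = ‖c • e‖ ^ 2 + ‖b'‖ ^ 2 := by
    have := norm_add_sq_eq_norm_sq_add_norm_sq_of_inner_eq_zero _ _ horth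
    rw [add_sub_cancel] at this
    linear_combination this
  have hTb : ‖α • c • e - b‖ ^ 2 = ‖1 - α‖ ^ 2 * ‖c • e‖ ^ 2 + ‖b'‖ ^ 2 := by
    have horth' : ⟪(α - 1) • c • e, -b'⟫_𝕜 = 0 := by
      rw [inner_smul_left, inner_neg_right, horth]; simp
    have := norm_add_sq_eq_norm_sq_add_norm_sq_of_inner_eq_zero _ _ horth'
    have hsplit : (α - 1) • c • e + -b' = α • c • e - b := by
      simp only [b', sub_smul, one_smul]; abel
    rw [hsplit, norm_neg, norm_smul, ← norm_neg (α - 1), neg_sub] at this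
    linear_combination this
  have hM : ‖1 - α‖ ^ 2 ≤ max 1 ‖1 - α‖ ^ 2 := by gcongr; exact le_max_right _ _
  have hM1 : 1 ≤ max 1 ‖1 - α‖ ^ 2 := one_le_pow₀ (le_max_left _ _)
  refine le_of_pow_le_pow_left₀ two_ne_zero (by positivity) ?_
  rw [hTb, mul_pow, hb]
  nlinarith [sq_nonneg ‖c • e‖, sq_nonneg ‖b'‖]

/-- For `α = 2` this is Buzano's inequality. -/
theorem norm_mul_inner_mul_inner_le {e : E} (he : ‖e‖ = 1) (α : 𝕜) (a b : E) :
    ‖α‖ * ‖⟪a, e⟫_𝕜 * ⟪e, b⟫_𝕜‖ ≤ max 1 ‖1 - α‖ * (‖a‖ * ‖b‖) + ‖⟪a, b⟫_𝕜‖ := by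
  have key : α * (⟪a, e⟫_𝕜 * ⟪e, b⟫_𝕜) = ⟪a, α • ⟪e, b⟫_𝕜 • e - b⟫_𝕜 + ⟪a, b⟫_𝕜 := by
    rw [inner_sub_right, inner_smul_right, inner_smul_right]; ring
  calc ‖α‖ * ‖⟪a, e⟫_𝕜 * ⟪e, b⟫_𝕜‖ = ‖⟪a, α • ⟪e, b⟫_𝕜 • e - b⟫_𝕜 + ⟪a, b⟫_𝕜‖ := by
        rw [← norm_mul, key]
    _ ≤ ‖a‖ * ‖α • ⟪e, b⟫_𝕜 • e - b‖ + ‖⟪a, b⟫_𝕜‖ :=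
        (norm_add_le _ _).trans (by gcongr; exact norm_inner_le_norm _ _)
    _ ≤ ‖a‖ * (max 1 ‖1 - α‖ * ‖b‖) + ‖⟪a, b⟫_𝕜‖ := by
        gcongr; exact norm_smul_inner_smul_sub_le he α b
    _ = max 1 ‖1 - α‖ * (‖a‖ * ‖b‖) + ‖⟪a, b⟫_𝕜‖ := by ring

end Buzano

theorem mul_add_mul_le_sqrt_mul_sqrt (a b c d : ℝ) :
    a * c + b * d ≤ √(a ^ 2 + b ^ 2) * √(c ^ 2 + d ^ 2) := by
  rw [← Real.sqrt_mul (by positivity)]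
  exact Real.le_sqrt_of_sq_le (by nlinarith [sq_nonneg (a * d - b * c)])

theorem le_of_forall_pow_two_pow_le_mul {a b c : ℝ} (hb : 0 ≤ b)
    (h : ∀ n : ℕ, a ^ 2 ^ n ≤ b ^ 2 ^ n * c) : a ≤ b := by
  by_contra! hab
  have ha' : 0 < a := hb.trans_lt hab
  have hlim : Filter.Tendsto (fun n : ℕ => (b / a) ^ 2 ^ n * c) Filter.atTop (nhds (0 * c)) :=
    ((tendsto_pow_atTop_nhds_zero_of_lt_one (by positivity) ((div_lt_one ha').mpr hab)).comp
      (tendsto_pow_atTop_atTop_of_one_lt one_lt_two)).mul_const c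
  rw [zero_mul] at hlim
  obtain ⟨n, hn⟩ := (hlim.eventually (gt_mem_nhds one_pos)).exists
  have : a ^ 2 ^ n ≤ a ^ 2 ^ n * ((b / a) ^ 2 ^ n * c) := by
    rw [div_pow, ← mul_assoc, mul_div_cancel₀ _ (by positivity)]; exact h n
  nlinarith [pow_pos ha' (2 ^ n)]

section SemiInner

variable {𝕜 E F : Type*} [RCLike 𝕜] [SeminormedAddCommGroup E] [NormedSpace 𝕜 E]
  [SeminormedAddCommGroup F] [InnerProductSpace 𝕜 F]

def IsAdjointPairWrt (R : E →L[𝕜] F) (S T : E →L[𝕜] E) : Prop :=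
  ∀ u v, ⟪R (S u), R v⟫_𝕜 = ⟪R u, R (T v)⟫_𝕜

namespace IsAdjointPairWrt

variable {R : E →L[𝕜] F} {S T S' T' P : E →L[𝕜] E}

theorem symm (h : IsAdjointPairWrt R S T) : IsAdjointPairWrt R T S := fun u v => by
  rw [← inner_conj_symm, ← h, inner_conj_symm]

theorem mul (h : IsAdjointPairWrt R S T) (h' : IsAdjointPairWrt R S' T') :
    IsAdjointPairWrt R (S * S') (T' * T) := fun _ _ =>
  (h _ _).trans (h' _ _)

theorem pow (h : IsAdjointPairWrt R P P) (n : ℕ) : IsAdjointPairWrt R (P ^ n) (P ^ n) := by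
  induction n with
  | zero => exact fun _ _ => rfl
  | succ n ih => simpa only [← pow_succ, ← pow_succ'] using ih.mul h

theorem norm_map_apply_sq_le (h : IsAdjointPairWrt R S T) (x : E) :
    ‖R (T x)‖ ^ 2 ≤ ‖R (S (T x))‖ * ‖R x‖ := by
  calc ‖R (T x)‖ ^ 2 = RCLike.re ⟪R (S (T x)), R x⟫_𝕜 := by
        rw [h, inner_self_eq_norm_sq]
    _ ≤ ‖⟪R (S (T x)), R x⟫_𝕜‖ := RCLike.re_le_norm _
    _ ≤ ‖R (S (T x))‖ * ‖R x‖ := norm_inner_le_norm _ _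

theorem norm_map_apply_pow_two_pow_le (h : IsAdjointPairWrt R P P) {x : E} (hx : ‖R x‖ = 1)
    (n : ℕ) : ‖R (P x)‖ ^ 2 ^ n ≤ ‖R ((P ^ 2 ^ n) x)‖ := by
  induction n with
  | zero => simp
  | succ n ih =>
    calc ‖R (P x)‖ ^ 2 ^ (n + 1) = (‖R (P x)‖ ^ 2 ^ n) ^ 2 := by rw [pow_succ, pow_mul]
      _ ≤ ‖R ((P ^ 2 ^ n) x)‖ ^ 2 := by gcongr
      _ ≤ ‖R ((P ^ 2 ^ n) ((P ^ 2 ^ n) x))‖ * ‖R x‖ := (h.pow _).norm_map_apply_sq_le x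
      _ = ‖R ((P ^ 2 ^ (n + 1)) x)‖ := by
          rw [hx, mul_one, pow_succ, pow_mul, sq, mul_apply_eq_comp]

theorem norm_map_apply_le_opNorm (h : IsAdjointPairWrt R P P) {x : E} (hx : ‖R x‖ = 1) :
    ‖R (P x)‖ ≤ ‖P‖ := by
  refine le_of_forall_pow_two_pow_le_mul (c := ‖R‖ * ‖x‖) (norm_nonneg _) fun n => ?_
  calc ‖R (P x)‖ ^ 2 ^ n ≤ ‖R ((P ^ 2 ^ n) x)‖ := h.norm_map_apply_pow_two_pow_le hx n
    _ ≤ ‖R‖ * (‖P ^ 2 ^ n‖ * ‖x‖) := R.le_opNorm_of_le ((P ^ 2 ^ n).le_opNorm x)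
    _ ≤ ‖R‖ * (‖P‖ ^ 2 ^ n * ‖x‖) := by gcongr; exact norm_pow_le' P (by positivity)
    _ = ‖P‖ ^ 2 ^ n * (‖R‖ * ‖x‖) := by ring

theorem norm_map_apply_sq_le_opNorm (h : IsAdjointPairWrt R S T) {x : E} (hx : ‖R x‖ = 1) :
    ‖R (T x)‖ ^ 2 ≤ ‖S * T‖ :=
  calc ‖R (T x)‖ ^ 2 ≤ ‖R ((S * T) x)‖ := by
        simpa only [hx, mul_one, mul_apply_eq_comp] using h.norm_map_apply_sq_le x
    _ ≤ ‖S * T‖ := (h.mul h.symm).norm_map_apply_le_opNorm hx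

theorem norm_smul_inner_sq_le (h : IsAdjointPairWrt R S T) {x : E} (hx : ‖R x‖ = 1) (α : 𝕜) :
    ‖α‖ * ‖⟪R x, R (T x)⟫_𝕜‖ ^ 2
      ≤ max 1 ‖1 - α‖ * (‖R (S x)‖ * ‖R (T x)‖) + ‖⟪R x, R (T (T x))⟫_𝕜‖ := by
  have := norm_mul_inner_mul_inner_le hx α (R (S x)) (R (T x))
  rwa [h, h, ← sq, norm_pow] at this

end IsAdjointPairWrt

theorem norm_smul_inner_sq_add_inner_sq_le {R : E →L[𝕜] F} {B C Bs Cs : E →L[𝕜] E}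
    (hB : IsAdjointPairWrt R Bs B) (hC : IsAdjointPairWrt R Cs C) {x : E} (hx : ‖R x‖ = 1)
    (α : 𝕜) :
    ‖α‖ * (‖⟪R x, R (B x)⟫_𝕜‖ ^ 2 + ‖⟪R x, R (C x)⟫_𝕜‖ ^ 2)
      ≤ max 1 ‖1 - α‖ * √(‖R (B x)‖ ^ 2 + ‖R (C x)‖ ^ 2) * √(‖R (Bs x)‖ ^ 2 + ‖R (Cs x)‖ ^ 2)
        + ‖⟪R x, R (B (B x))⟫_𝕜‖ + ‖⟪R x, R (C (C x))⟫_𝕜‖ := by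
  calc ‖α‖ * (‖⟪R x, R (B x)⟫_𝕜‖ ^ 2 + ‖⟪R x, R (C x)⟫_𝕜‖ ^ 2)
      ≤ (max 1 ‖1 - α‖ * (‖R (Bs x)‖ * ‖R (B x)‖) + ‖⟪R x, R (B (B x))⟫_𝕜‖)
        + (max 1 ‖1 - α‖ * (‖R (Cs x)‖ * ‖R (C x)‖) + ‖⟪R x, R (C (C x))⟫_𝕜‖) := by
        rw [mul_add]
        exact add_le_add (hB.norm_smul_inner_sq_le hx α) (hC.norm_smul_inner_sq_le hx α)
    _ = max 1 ‖1 - α‖ * (‖R (B x)‖ * ‖R (Bs x)‖ + ‖R (C x)‖ * ‖R (Cs x)‖)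
        + ‖⟪R x, R (B (B x))⟫_𝕜‖ + ‖⟪R x, R (C (C x))⟫_𝕜‖ := by ring
    _ ≤ _ := by rw [mul_assoc]; gcongr; exact mul_add_mul_le_sqrt_mul_sqrt _ _ _ _

end SemiInner

section SeminormA

variable {E : Type*} [NormedAddCommGroup E] [InnerProductSpace ℂ E]

/-- `wA`, `wAe` and `normAe` unfold definitionally to instances of `supA`. -/
def supA (A : E →L[ℂ] E) (f : E → ℝ) : ℝ :=
  sSup {r : ℝ | ∃ x : E, normA A x = 1 ∧ r = f x}

theorem le_supA {A : E →L[ℂ] E} {f : E → ℝ} {c : ℝ} (hc : ∀ y, normA A y = 1 → f y ≤ c)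
    {x : E} (hx : normA A x = 1) : f x ≤ supA A f :=
  le_csSup ⟨c, by rintro r ⟨y, hy, rfl⟩; exact hc y hy⟩ ⟨x, hx, rfl⟩

theorem supA_le {A : E →L[ℂ] E} {f : E → ℝ} {c : ℝ} (hc : 0 ≤ c)
    (h : ∀ x, normA A x = 1 → f x ≤ c) : supA A f ≤ c :=
  Real.sSup_le (by rintro r ⟨x, hx, rfl⟩; exact h x hx) hc

theorem supA_nonneg {A : E →L[ℂ] E} {f : E → ℝ} (hf : ∀ x, 0 ≤ f x) : 0 ≤ supA A f :=
  Real.sSup_nonneg (by rintro r ⟨x, -, rfl⟩; exact hf x)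

end SeminormA

section StarMulSelf

open ContinuousLinearMap

variable (R : H →L[ℂ] H)

theorem innerA_star_mul_self (x y : H) : innerA (star R * R) x y = ⟪R y, R x⟫ := by
  rw [innerA, mul_apply_eq_comp, star_eq_adjoint, adjoint_inner_right]

theorem normA_star_mul_self (x : H) : normA (star R * R) x = ‖R x‖ := by
  rw [normA, innerA_star_mul_self, ← RCLike.re_eq_complex_re, inner_self_eq_norm_sq,
    Real.sqrt_sq (norm_nonneg _)]

variable {R}

theorem isAdjointPairWrt_of_comp_eq {S T : H →L[ℂ] H}
    (h : (star R * R).comp S = (adjoint T).comp (star R * R)) : IsAdjointPairWrt R S T :=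
  fun u v => calc
    ⟪R (S u), R v⟫ = ⟪(star R * R) (S u), v⟫ := by
      rw [mul_apply_eq_comp, star_eq_adjoint, adjoint_inner_left]
    _ = ⟪adjoint T ((star R * R) u), v⟫ := by rw [← comp_apply, h, comp_apply]
    _ = ⟪R u, R (T v)⟫ := by
      rw [adjoint_inner_left, mul_apply_eq_comp, star_eq_adjoint, adjoint_inner_left]

theorem sqrt_le_normAe {B C Bs Cs : H →L[ℂ] H} (hB : IsAdjointPairWrt R Bs B)
    (hC : IsAdjointPairWrt R Cs C) {x : H} (hx : ‖R x‖ = 1) :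
    √(‖R (B x)‖ ^ 2 + ‖R (C x)‖ ^ 2) ≤ normAe (star R * R) B C := by
  calc √(‖R (B x)‖ ^ 2 + ‖R (C x)‖ ^ 2)
      = √(normA (star R * R) (B x) ^ 2 + normA (star R * R) (C x) ^ 2) := by
        rw [normA_star_mul_self, normA_star_mul_self]
    _ ≤ normAe (star R * R) B C := by
        refine le_supA (f := fun y => √(normA _ (B y) ^ 2 + normA _ (C y) ^ 2))
          (c := √(‖Bs * B‖ + ‖Cs * C‖)) (fun y hy => ?_)
          ((normA_star_mul_self R x).trans hx)
        rw [normA_star_mul_self] at hy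
        simp only [normA_star_mul_self]
        gcongr
        exacts [hB.norm_map_apply_sq_le_opNorm hy, hC.norm_map_apply_sq_le_opNorm hy]

theorem norm_inner_le_wA {S T : H →L[ℂ] H} (h : IsAdjointPairWrt R S T) {x : H}
    (hx : ‖R x‖ = 1) : ‖⟪R x, R (T (T x))⟫‖ ≤ wA (star R * R) (T * T) := by
  calc ‖⟪R x, R (T (T x))⟫‖ = ‖innerA (star R * R) ((T * T) x) x‖ := by
        rw [innerA_star_mul_self, mul_apply_eq_comp]
    _ ≤ wA (star R * R) (T * T) := by
        refine le_supA (f := fun y => ‖innerA _ ((T * T) y) y‖) (c := √‖S * S * (T * T)‖)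
          (fun y hy => ?_)
          ((normA_star_mul_self R x).trans hx)
        rw [normA_star_mul_self] at hy
        rw [innerA_star_mul_self]
        refine (norm_inner_le_norm _ _).trans ?_
        rw [hy, one_mul]
        exact Real.le_sqrt_of_sq_le ((h.mul h).norm_map_apply_sq_le_opNorm hy)

theorem sq_wAe_le {B C : H →L[ℂ] H} {c : ℝ} (hc : 0 ≤ c)
    (h : ∀ x, ‖R x‖ = 1 → ‖⟪R x, R (B x)⟫‖ ^ 2 + ‖⟪R x, R (C x)⟫‖ ^ 2 ≤ c) :
    wAe (star R * R) B C ^ 2 ≤ c := by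
  refine (Real.le_sqrt (supA_nonneg fun _ => Real.sqrt_nonneg _) hc).mp
    (supA_le (Real.sqrt_nonneg _) fun x hx => ?_)
  rw [normA_star_mul_self] at hx
  simp only [innerA_star_mul_self]
  exact Real.sqrt_le_sqrt (h x hx)

end StarMulSelf

theorem stmt9_general (A : H →L[ℂ] H) (hA : A.IsPositive)
    (B C Bs Cs : H →L[ℂ] H)
    (hB : A.comp Bs = (ContinuousLinearMap.adjoint B).comp A)
    (hC : A.comp Cs = (ContinuousLinearMap.adjoint C).comp A)
    (α : ℂ) (hα : α ≠ 0) :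
    (wAe A B C)^2
      ≤ (max 1 ‖1 - α‖ * normAe A B C * normAe A Bs Cs
          + wA A (B * B) + wA A (C * C)) / ‖α‖ := by
  obtain ⟨R, rfl⟩ := CStarAlgebra.nonneg_iff_eq_star_mul_self.mp
    ((ContinuousLinearMap.nonneg_iff_isPositive A).mpr hA)
  have hBR := isAdjointPairWrt_of_comp_eq hB
  have hCR := isAdjointPairWrt_of_comp_eq hC
  have hwB : 0 ≤ wA (star R * R) (B * B) := supA_nonneg fun _ => norm_nonneg _
  have hwC : 0 ≤ wA (star R * R) (C * C) := supA_nonneg fun _ => norm_nonneg _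
  have hn : 0 ≤ normAe (star R * R) B C := supA_nonneg fun _ => Real.sqrt_nonneg _
  have hns : 0 ≤ normAe (star R * R) Bs Cs := supA_nonneg fun _ => Real.sqrt_nonneg _
  refine sq_wAe_le (by positivity) fun x hx => ?_
  rw [le_div_iff₀ (norm_pos_iff.mpr hα), mul_comm]
  refine (norm_smul_inner_sq_add_inner_sq_le hBR hCR hx α).trans ?_
  gcongr
  exacts [sqrt_le_normAe hBR hCR hx, sqrt_le_normAe hBR.symm hCR.symm hx,
    norm_inner_le_wA hBR hx, norm_inner_le_wA hCR hx]

theorem stmt9 (A : H →L[ℂ] H) (hA : A.IsPositive) (hA0 : A ≠ 0)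
    (B C Bs Cs : H →L[ℂ] H)
    (hB : A.comp Bs = (ContinuousLinearMap.adjoint B).comp A)
    (hC : A.comp Cs = (ContinuousLinearMap.adjoint C).comp A)
    (α : ℂ) (hα : α ≠ 0) :
    (wAe A B C)^2
      ≤ (max 1 ‖1 - α‖ * normAe A B C * normAe A Bs Cs
          + wA A (B * B) + wA A (C * C)) / ‖α‖ :=
  stmt9_general A hA B C Bs Cs hB hC α hα
end
end

section
/- Let B and C be A-selfadjoint bounded linear operators on H. Then (1/2)·max{ ‖B+C‖_A² + (c_A(B−C))², ‖B−C‖_A² + (c_A(B+C))² } ≤ (w_{A,e}(B,C))². -/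
noncomputable section

open scoped ComplexInnerProductSpace

variable {H : Type*} [NormedAddCommGroup H] [InnerProductSpace ℂ H] [CompleteSpace H]

/-! Write `A = R * R` with `R = √A`, so that `⟨x, y⟩_A = ⟪R y, R x⟫`, `‖x‖_A = ‖R x‖`, and
`A`-selfadjointness of `T` reads `⟪R (T x), R y⟫ = ⟪R x, R (T y)⟫`. For such `T`, Reid's power
trick `‖R T x‖ ^ 2 ^ n ≤ ‖R x‖ ^ (2 ^ n - 1) * ‖R T ^ 2 ^ n x‖` gives `‖R T x‖ ≤ ‖T‖ ‖R x‖`,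
so that `w_{A,e}(B,C)` is a genuine (finite) supremum, and polarization gives
`‖T‖_A ≤ sup_{‖x‖_A = 1} |⟨T x, x⟩_A|`.

For `‖x‖_A = 1` the parallelogram law gives
`|⟨(B+C)x,x⟩_A|² + |⟨(B-C)x,x⟩_A|² = 2 (|⟨Bx,x⟩_A|² + |⟨Cx,x⟩_A|²) ≤ 2 w_{A,e}(B,C)²`;
bounding the second term below by `c_A(B-C)²` and applying polarization to the `A`-selfadjoint
`B + C` yields `‖B+C‖_A² + c_A(B-C)² ≤ 2 w_{A,e}(B,C)²`. Replacing `C` by `-C` gives the other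
term of the maximum. -/

open ContinuousLinearMap Filter Topology

lemma le_of_forall_pow_two_pow_le {a d K : ℝ} (hd : 0 ≤ d)
    (h : ∀ n : ℕ, a ^ 2 ^ n ≤ d ^ 2 ^ n * K) : a ≤ d := by
  by_contra! hda
  have ha : 0 < a := hd.trans_lt hda
  have hlim : Tendsto (fun n : ℕ ↦ (d / a) ^ 2 ^ n * K) atTop (𝓝 0) := by
    have hpow := (tendsto_pow_atTop_nhds_zero_of_lt_one (div_nonneg hd ha.le)
      ((div_lt_one ha).2 hda)).comp (tendsto_pow_atTop_atTop_of_one_lt one_lt_two)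
    simpa using hpow.mul_const K
  obtain ⟨n, hn⟩ := (hlim.eventually (gt_mem_nhds one_pos)).exists
  rw [div_pow, div_mul_eq_mul_div, div_lt_one (by positivity)] at hn
  linarith [h n]

section SymmetricForSeminorm

variable {E : Type*} [NormedAddCommGroup E] [InnerProductSpace ℂ E] {R T : E →L[ℂ] E}

lemma norm_inner_apply_le_mul_norm_sq {M : ℝ}
    (h : ∀ x, ‖R x‖ = 1 → ‖⟪R x, R (T x)⟫‖ ≤ M) (x : E) :
    ‖⟪R x, R (T x)⟫‖ ≤ M * ‖R x‖ ^ 2 := by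
  by_cases hx : R x = 0
  · simp [hx]
  have hunit := h _ (by rw [map_smul]; exact norm_smul_inv_norm hx)
  simp only [map_smul, inner_smul_left, inner_smul_right, norm_mul, Complex.norm_conj, norm_inv,
    RCLike.norm_ofReal, abs_norm] at hunit
  calc ‖⟪R x, R (T x)⟫‖ = ‖R x‖ ^ 2 * (‖R x‖⁻¹ * (‖R x‖⁻¹ * ‖⟪R x, R (T x)⟫‖)) := by field_simp
    _ ≤ ‖R x‖ ^ 2 * M := by gcongr
    _ = M * ‖R x‖ ^ 2 := mul_comm _ _

variable (hT : ∀ x y, ⟪R (T x), R y⟫ = ⟪R x, R (T y)⟫)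
include hT

lemma inner_pow_apply_comm (n : ℕ) (x y : E) :
    ⟪R ((T ^ n) x), R y⟫ = ⟪R x, R ((T ^ n) y)⟫ := by
  induction n generalizing x y with
  | zero => rfl
  | succ n ih =>
    rw [pow_apply_eq_iterate, pow_apply_eq_iterate, Function.iterate_succ_apply,
      Function.iterate_succ_apply', ← pow_apply_eq_iterate, ← pow_apply_eq_iterate, ih, hT]

lemma norm_apply_sq_le (x : E) : ‖R (T x)‖ ^ 2 ≤ ‖R x‖ * ‖R (T (T x))‖ :=
  calc ‖R (T x)‖ ^ 2 = ‖⟪R (T x), R (T x)⟫‖ := by simp [inner_self_eq_norm_sq_to_K]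
    _ = ‖⟪R x, R (T (T x))⟫‖ := by rw [hT]
    _ ≤ ‖R x‖ * ‖R (T (T x))‖ := norm_inner_le_norm _ _

lemma norm_apply_pow_two_pow_le (n : ℕ) (x : E) :
    ‖R (T x)‖ ^ 2 ^ n ≤ ‖R x‖ ^ (2 ^ n - 1) * ‖R ((T ^ 2 ^ n) x)‖ := by
  induction n with
  | zero => simp
  | succ n ih =>
    have hsq := norm_apply_sq_le (inner_pow_apply_comm hT (2 ^ n)) x
    rw [← mul_apply_eq_comp (T ^ 2 ^ n), ← pow_add, ← two_mul, ← pow_succ'] at hsq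
    calc ‖R (T x)‖ ^ 2 ^ (n + 1) = (‖R (T x)‖ ^ 2 ^ n) ^ 2 := by rw [pow_succ, pow_mul]
      _ ≤ (‖R x‖ ^ (2 ^ n - 1)) ^ 2 * ‖R ((T ^ 2 ^ n) x)‖ ^ 2 := by
        rw [← mul_pow]; gcongr
      _ ≤ (‖R x‖ ^ (2 ^ n - 1)) ^ 2 * (‖R x‖ * ‖R ((T ^ 2 ^ (n + 1)) x)‖) := by gcongr
      _ = ‖R x‖ ^ (2 ^ (n + 1) - 1) * ‖R ((T ^ 2 ^ (n + 1)) x)‖ := by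
        rw [← mul_assoc, ← pow_mul, ← pow_succ]
        congr 2
        have := Nat.one_le_two_pow (n := n)
        rw [pow_succ]
        omega

lemma norm_apply_le_opNorm_mul (x : E) : ‖R (T x)‖ ≤ ‖T‖ * ‖R x‖ := by
  rcases (norm_nonneg (R x)).eq_or_lt with hx | hx
  · have hsq := norm_apply_sq_le hT x
    rw [← hx, zero_mul, sq_nonpos_iff] at hsq
    rw [← hx, mul_zero, hsq]
  · refine le_of_forall_pow_two_pow_le (K := ‖R‖ * ‖x‖ / ‖R x‖) (by positivity) fun n ↦ ?_
    have hpow : ‖R ((T ^ 2 ^ n) x)‖ ≤ ‖R‖ * (‖T‖ ^ 2 ^ n * ‖x‖) :=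
      calc ‖R ((T ^ 2 ^ n) x)‖ ≤ ‖R‖ * (‖T ^ 2 ^ n‖ * ‖x‖) :=
            R.le_opNorm_of_le ((T ^ 2 ^ n).le_opNorm x)
        _ ≤ ‖R‖ * (‖T‖ ^ 2 ^ n * ‖x‖) := by gcongr; exact norm_pow_le' T (by positivity)
    calc ‖R (T x)‖ ^ 2 ^ n ≤ ‖R x‖ ^ (2 ^ n - 1) * ‖R ((T ^ 2 ^ n) x)‖ :=
          norm_apply_pow_two_pow_le hT n x
      _ ≤ ‖R x‖ ^ (2 ^ n - 1) * (‖R‖ * (‖T‖ ^ 2 ^ n * ‖x‖)) := by gcongr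
      _ = (‖T‖ * ‖R x‖) ^ 2 ^ n * (‖R‖ * ‖x‖ / ‖R x‖) := by
        rw [mul_pow, ← pow_sub_one_mul (pow_ne_zero n two_ne_zero) ‖R x‖]
        field_simp

lemma re_inner_add_sub_re_inner_sub (x y : E) :
    ⟪R (x + y), R (T (x + y))⟫.re - ⟪R (x - y), R (T (x - y))⟫.re = 4 * ⟪R y, R (T x)⟫.re := by
  have hsymm : ⟪R x, R (T y)⟫ = (starRingEnd ℂ) ⟪R y, R (T x)⟫ := by
    rw [← hT, inner_conj_symm]
  simp only [map_add, map_sub, inner_add_left, inner_add_right, inner_sub_left, inner_sub_right,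
    hsymm, Complex.add_re, Complex.sub_re, Complex.conj_re]
  ring

/-- Polarization: test the bound at `x ± y`, with `y` the `R`-normalization of `T x`. -/
lemma norm_apply_le_of_norm_inner_le {M : ℝ} (hM : ∀ x, ‖⟪R x, R (T x)⟫‖ ≤ M * ‖R x‖ ^ 2)
    {x : E} (hx : ‖R x‖ = 1) : ‖R (T x)‖ ≤ M := by
  by_cases hTx : R (T x) = 0
  · simpa [hTx, hx] using hM x
  set y := (‖R (T x)‖⁻¹ : ℂ) • T x
  have hy : ‖R y‖ = 1 := by rw [map_smul]; exact norm_smul_inv_norm hTx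
  have hre : ⟪R y, R (T x)⟫.re = ‖R (T x)‖ := by
    rw [map_smul, inner_smul_left, ← Complex.ofReal_inv, Complex.conj_ofReal, Complex.re_ofReal_mul,
      ← RCLike.re_to_complex, inner_self_eq_norm_sq]
    field_simp
  have hpar : ‖R (x + y)‖ ^ 2 + ‖R (x - y)‖ ^ 2 = 4 := by
    have := parallelogram_law_with_norm ℂ (R x) (R y)
    rw [hx, hy] at this
    rw [map_add, map_sub, sq, sq]
    linarith
  have hplus := (Complex.re_le_norm _).trans (hM (x + y))
  have hminus := (neg_le_of_abs_le (Complex.abs_re_le_norm _)).trans' (neg_le_neg (hM (x - y)))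
  have hpolar := re_inner_add_sub_re_inner_sub hT x y
  rw [hre] at hpolar
  have : 4 * ‖R (T x)‖ ≤ M * (‖R (x + y)‖ ^ 2 + ‖R (x - y)‖ ^ 2) := by linarith
  rw [hpar] at this
  linarith

end SymmetricForSeminorm

section Radii

variable {E : Type*} [NormedAddCommGroup E] [InnerProductSpace ℂ E] {A T B C : E →L[ℂ] E}

lemma cA_nonneg : 0 ≤ cA A T :=
  Real.sInf_nonneg (by rintro r ⟨x, -, rfl⟩; positivity)

lemma cA_le {x : E} (hx : normA A x = 1) : cA A T ≤ ‖innerA A (T x) x‖ :=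
  csInf_le ⟨0, by rintro r ⟨y, -, rfl⟩; positivity⟩ ⟨x, hx, rfl⟩

lemma opNormA_nonneg : 0 ≤ opNormA A T :=
  Real.sSup_nonneg (by rintro r ⟨x, -, rfl⟩; exact Real.sqrt_nonneg _)

lemma opNormA_le {M : ℝ} (hM : 0 ≤ M) (h : ∀ x, normA A x = 1 → normA A (T x) ≤ M) :
    opNormA A T ≤ M :=
  Real.sSup_le (by rintro r ⟨x, hx, rfl⟩; exact h x hx) hM

lemma wAe_neg_right : wAe A B (-C) = wAe A B C := by
  simp only [wAe, innerA, neg_apply, map_neg, inner_neg_right, norm_neg]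

lemma innerA_add_left (x y : E) : innerA A ((B + C) x) y = innerA A (B x) y + innerA A (C x) y := by
  simp only [innerA, add_apply, map_add, inner_add_right]

lemma innerA_sub_left (x y : E) : innerA A ((B - C) x) y = innerA A (B x) y - innerA A (C x) y := by
  simp only [innerA, sub_apply, map_sub, inner_sub_right]

end Radii

section SemiInnerProduct

variable {A B C R T : H →L[ℂ] H}

lemma ContinuousLinearMap.IsPositive.exists_isSelfAdjoint_mul_self_eq (hA : A.IsPositive) :
    ∃ R : H →L[ℂ] H, IsSelfAdjoint R ∧ R * R = A := by
  have hA' : 0 ≤ A := (nonneg_iff_isPositive A).2 hA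
  exact ⟨CFC.sqrt A, ((nonneg_iff_isPositive _).1 (CFC.sqrt_nonneg A)).isSelfAdjoint,
    CFC.sqrt_mul_sqrt_self A hA'⟩

lemma inner_apply_eq_inner_mul_self_apply (hR : IsSelfAdjoint R) (x y : H) :
    ⟪R x, R y⟫ = ⟪x, (R * R) y⟫ :=
  hR.isSymmetric x (R y)

lemma innerA_eq_inner (hR : IsSelfAdjoint R) (hRA : R * R = A) (x y : H) :
    innerA A x y = ⟪R y, R x⟫ := by
  rw [innerA, inner_apply_eq_inner_mul_self_apply hR, hRA]

lemma normA_eq_norm (hR : IsSelfAdjoint R) (hRA : R * R = A) (x : H) : normA A x = ‖R x‖ := by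
  rw [normA, innerA_eq_inner hR hRA, ← RCLike.re_to_complex, inner_self_eq_norm_sq,
    Real.sqrt_sq (norm_nonneg _)]

lemma inner_apply_comm_of_comp_eq_adjoint_comp (hR : IsSelfAdjoint R) (hRA : R * R = A)
    (hT : A.comp T = (adjoint T).comp A) (x y : H) :
    ⟪R (T x), R y⟫ = ⟪R x, R (T y)⟫ := by
  rw [inner_apply_eq_inner_mul_self_apply hR, inner_apply_eq_inner_mul_self_apply hR, hRA,
    ← adjoint_inner_right, ← comp_apply (adjoint T) A, ← hT, comp_apply]

lemma norm_innerA_le_opNorm (hA : A.IsPositive) (hT : A.comp T = (adjoint T).comp A) {x : H}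
    (hx : normA A x = 1) : ‖innerA A (T x) x‖ ≤ ‖T‖ := by
  obtain ⟨R, hR, hRA⟩ := hA.exists_isSelfAdjoint_mul_self_eq
  rw [normA_eq_norm hR hRA] at hx
  calc ‖innerA A (T x) x‖ ≤ ‖R x‖ * ‖R (T x)‖ := by
        rw [innerA_eq_inner hR hRA]; exact norm_inner_le_norm _ _
    _ = ‖R (T x)‖ := by rw [hx, one_mul]
    _ ≤ ‖T‖ * ‖R x‖ :=
        norm_apply_le_opNorm_mul (inner_apply_comm_of_comp_eq_adjoint_comp hR hRA hT) x
    _ = ‖T‖ := by rw [hx, mul_one]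

lemma normA_apply_le_of_norm_innerA_le (hA : A.IsPositive) (hT : A.comp T = (adjoint T).comp A)
    {M : ℝ} (hM : ∀ x, normA A x = 1 → ‖innerA A (T x) x‖ ≤ M) {x : H} (hx : normA A x = 1) :
    normA A (T x) ≤ M := by
  obtain ⟨R, hR, hRA⟩ := hA.exists_isSelfAdjoint_mul_self_eq
  simp only [normA_eq_norm hR hRA, innerA_eq_inner hR hRA] at hM hx ⊢
  exact norm_apply_le_of_norm_inner_le (inner_apply_comm_of_comp_eq_adjoint_comp hR hRA hT)
    (norm_inner_apply_le_mul_norm_sq hM) hx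

lemma exists_normA_eq_one (hA : A.IsPositive) (hA0 : A ≠ 0) : ∃ x, normA A x = 1 := by
  obtain ⟨R, hR, hRA⟩ := hA.exists_isSelfAdjoint_mul_self_eq
  obtain ⟨z, hz⟩ : ∃ z, R z ≠ 0 := by
    by_contra! h
    exact hA0 (by rw [← hRA]; ext z; simp [h])
  exact ⟨(‖R z‖⁻¹ : ℂ) • z, by rw [normA_eq_norm hR hRA, map_smul]; exact norm_smul_inv_norm hz⟩

lemma sqrt_le_wAe (hA : A.IsPositive) (hB : A.comp B = (adjoint B).comp A)
    (hC : A.comp C = (adjoint C).comp A) {x : H} (hx : normA A x = 1) :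
    √(‖innerA A (B x) x‖ ^ 2 + ‖innerA A (C x) x‖ ^ 2) ≤ wAe A B C := by
  refine le_csSup ⟨√(‖B‖ ^ 2 + ‖C‖ ^ 2), ?_⟩ ⟨x, hx, rfl⟩
  rintro r ⟨y, hy, rfl⟩
  gcongr
  exacts [norm_innerA_le_opNorm hA hB hy, norm_innerA_le_opNorm hA hC hy]

lemma opNormA_add_sq_add_cA_sub_sq_le (hA : A.IsPositive) (hA0 : A ≠ 0)
    (hB : A.comp B = (adjoint B).comp A) (hC : A.comp C = (adjoint C).comp A) :
    opNormA A (B + C) ^ 2 + cA A (B - C) ^ 2 ≤ 2 * wAe A B C ^ 2 := by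
  set w := wAe A B C
  set c := cA A (B - C)
  have hBC : A.comp (B + C) = (adjoint (B + C)).comp A := by
    rw [map_add, comp_add, add_comp, hB, hC]
  have hkey : ∀ x, normA A x = 1 → ‖innerA A ((B + C) x) x‖ ^ 2 + c ^ 2 ≤ 2 * w ^ 2 := by
    intro x hx
    have hpar := parallelogram_law_with_norm ℂ (innerA A (B x) x) (innerA A (C x) x)
    have hc : c ^ 2 ≤ ‖innerA A ((B - C) x) x‖ ^ 2 := by gcongr; exacts [cA_nonneg, cA_le hx]
    have hw := (Real.sqrt_le_iff.1 (sqrt_le_wAe hA hB hC hx)).2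
    rw [innerA_add_left]
    rw [innerA_sub_left] at hc
    linarith
  obtain ⟨x₀, hx₀⟩ := exists_normA_eq_one hA hA0
  have hc : c ^ 2 ≤ 2 * w ^ 2 := by
    linarith [hkey x₀ hx₀, sq_nonneg ‖innerA A ((B + C) x₀) x₀‖]
  have hBC_le : opNormA A (B + C) ≤ √(2 * w ^ 2 - c ^ 2) :=
    opNormA_le (Real.sqrt_nonneg _) fun x hx ↦ normA_apply_le_of_norm_innerA_le hA hBC
      (fun y hy ↦ Real.le_sqrt_of_sq_le (by linarith [hkey y hy])) hx
  calc opNormA A (B + C) ^ 2 + c ^ 2 ≤ √(2 * w ^ 2 - c ^ 2) ^ 2 + c ^ 2 := by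
        gcongr; exact opNormA_nonneg
    _ = 2 * w ^ 2 := by rw [Real.sq_sqrt (by linarith)]; ring

end SemiInnerProduct

theorem stmt14 (A : H →L[ℂ] H) (hA : A.IsPositive) (hA0 : A ≠ 0)
    (B C : H →L[ℂ] H)
    (hB : A.comp B = (ContinuousLinearMap.adjoint B).comp A)
    (hC : A.comp C = (ContinuousLinearMap.adjoint C).comp A) :
    (1/2) * max ((opNormA A (B + C))^2 + (cA A (B - C))^2)
        ((opNormA A (B - C))^2 + (cA A (B + C))^2)
      ≤ (wAe A B C)^2 := by
  have hC' : A.comp (-C) = (adjoint (-C)).comp A := by rw [map_neg, comp_neg, neg_comp, hC]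
  have hplus := opNormA_add_sq_add_cA_sub_sq_le hA hA0 hB hC
  have hminus := opNormA_add_sq_add_cA_sub_sq_le hA hA0 hB hC'
  rw [← sub_eq_add_neg, sub_neg_eq_add, wAe_neg_right] at hminus
  linarith [max_le hplus hminus]
end
end
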